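/- Let λ be a dominant weight with δ-coordinate 0 and level n ≥ 1, and let ω₁, …, ω_n be straight weights such that every partial sum σⱼ = ω₁ + ⋯ + ωⱼ (1 ≤ j ≤ n) is dominant and σ_n = λ − Δ(λ)δ. Then every partial sum σⱼ is an initial weight, i.e. the δ-coordinate of σⱼ equals −Δ(σⱼ). (In particular, any straight weight path from 0 to an initial weight passes through only initial weights.) -/

import Mathlib

noncomputable section
open scoped Classical

/-- The ambient space `ℝ^10` with ordered basis `(ε₀, δ, ε₁, …, ε₈)`:
index `0` is the `ε₀`-coordinate, index `1` is the `δ`-coordinate, and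
indices `2,…,9` are the coordinates along `ε₁,…,ε₈`. -/
abbrev E9 : Type := Fin 10 → ℝ

/-- The symmetric bilinear form: `⟨εᵢ,εⱼ⟩ = δᵢⱼ` (1 ≤ i,j ≤ 8), `⟨δ,ε₀⟩ = ⟨ε₀,δ⟩ = 1`,
all other pairings of basis vectors zero. -/
def B (x y : E9) : ℝ :=
  x 0 * y 1 + x 1 * y 0 + x 2 * y 2 + x 3 * y 3 + x 4 * y 4 + x 5 * y 5 +
    x 6 * y 6 + x 7 * y 7 + x 8 * y 8 + x 9 * y 9

/-- The basis vector `ε₀`. -/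
def e0 : E9 := fun j => if (j : ℕ) = 0 then 1 else 0

/-- The null root `δ`. -/
def deltaV : E9 := fun j => if (j : ℕ) = 1 then 1 else 0

/-- The basis vectors `ε₁, …, ε₈`, indexed by `i : Fin 8` (so `epsV i = ε_{i+1}`). -/
def epsV (i : Fin 8) : E9 := fun j => if (j : ℕ) = (i : ℕ) + 2 then 1 else 0

/-- The simple roots `α₀, α₁, …, α₈` of `E₉`:
`αᵢ = εᵢ - εᵢ₊₁` for `1 ≤ i ≤ 7`, `α₈ = ε₇ + ε₈`, and
`α₀ = ½(δ + ε₈ - Σ_{i=1}^{7} εᵢ)`. -/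
def rootα : Fin 9 → E9
  | 0 => (1 / 2 : ℝ) • (deltaV + epsV 7
           - (epsV 0 + epsV 1 + epsV 2 + epsV 3 + epsV 4 + epsV 5 + epsV 6))
  | 1 => epsV 0 - epsV 1
  | 2 => epsV 1 - epsV 2
  | 3 => epsV 2 - epsV 3
  | 4 => epsV 3 - epsV 4
  | 5 => epsV 4 - epsV 5
  | 6 => epsV 5 - epsV 6
  | 7 => epsV 6 - epsV 7
  | 8 => epsV 6 + epsV 7

lemma B_add_left (x y z : E9) : B (x + y) z = B x z + B y z := by
  simp [B, Pi.add_apply]; ring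

lemma B_smul_left (c : ℝ) (x z : E9) : B (c • x) z = c * B x z := by
  simp [B, Pi.smul_apply, smul_eq_mul]; ring

lemma B_sub_left (x y z : E9) : B (x - y) z = B x z - B y z := by
  simp [B, Pi.sub_apply]; ring

/-- The simple reflection `sᵢ(ν) = ν - ⟨ν,αᵢ⟩αᵢ`, as a linear endomorphism of `ℝ^10`. -/
def sLin (i : Fin 9) : E9 →ₗ[ℝ] E9 where
  toFun v := v - B v (rootα i) • rootα i
  map_add' v w := by
    simp only [B_add_left, add_smul]
    abel
  map_smul' c v := by
    simp only [B_smul_left, RingHom.id_apply, smul_sub, mul_smul]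

lemma B_rootα_self (i : Fin 9) : B (rootα i) (rootα i) = 2 := by
  fin_cases i <;>
    norm_num [B, rootα, epsV, deltaV, Pi.add_apply, Pi.sub_apply, Pi.smul_apply, smul_eq_mul,
      show ((0 : Fin 10) : ℕ) = 0 from rfl, show ((1 : Fin 10) : ℕ) = 1 from rfl,
      show ((2 : Fin 10) : ℕ) = 2 from rfl, show ((3 : Fin 10) : ℕ) = 3 from rfl,
      show ((4 : Fin 10) : ℕ) = 4 from rfl, show ((5 : Fin 10) : ℕ) = 5 from rfl,
      show ((6 : Fin 10) : ℕ) = 6 from rfl, show ((7 : Fin 10) : ℕ) = 7 from rfl,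
      show ((8 : Fin 10) : ℕ) = 8 from rfl, show ((9 : Fin 10) : ℕ) = 9 from rfl,
      show ((0 : Fin 8) : ℕ) = 0 from rfl, show ((1 : Fin 8) : ℕ) = 1 from rfl,
      show ((2 : Fin 8) : ℕ) = 2 from rfl, show ((3 : Fin 8) : ℕ) = 3 from rfl,
      show ((4 : Fin 8) : ℕ) = 4 from rfl, show ((5 : Fin 8) : ℕ) = 5 from rfl,
      show ((6 : Fin 8) : ℕ) = 6 from rfl, show ((7 : Fin 8) : ℕ) = 7 from rfl]

lemma sLin_apply (i : Fin 9) (v : E9) : sLin i v = v - B v (rootα i) • rootα i := rfl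

lemma sLin_invol (i : Fin 9) : (sLin i).comp (sLin i) = LinearMap.id := by
  refine LinearMap.ext fun v => ?_
  show sLin i (sLin i v) = v
  rw [sLin_apply, sLin_apply, B_sub_left, B_smul_left, B_rootα_self]
  module

/-- The simple reflection `sᵢ` as an element of `GL(ℝ^10)`. -/
def sGL (i : Fin 9) : LinearMap.GeneralLinearGroup ℝ E9 where
  val := sLin i
  inv := sLin i
  val_inv := by rw [Module.End.mul_eq_comp]; exact sLin_invol i
  inv_val := by rw [Module.End.mul_eq_comp]; exact sLin_invol i

/-- The Weyl group of `E₉`: the subgroup of `GL(ℝ^10)` generated by the nine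
simple reflections `s₀, s₁, …, s₈`. -/
def W : Subgroup (LinearMap.GeneralLinearGroup ℝ E9) := Subgroup.closure (Set.range sGL)

/-- The fundamental weights `Λ₀, Λ₁, …, Λ₈`:
`Λᵢ = (i, 0; 1,…,1, 0,…,0)` (`i` ones) for `1 ≤ i ≤ 6`,
`Λ₇ = ½(8, 0; 1,1,1,1,1,1,1,-1)`, `Λ₈ = ½(6, 0; 1,…,1)`, `Λ₀ = (2, 0; 0,…,0)`. -/
def Λw : Fin 9 → E9
  | 0 => (2 : ℝ) • e0
  | 1 => e0 + epsV 0
  | 2 => (2 : ℝ) • e0 + (epsV 0 + epsV 1)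
  | 3 => (3 : ℝ) • e0 + (epsV 0 + epsV 1 + epsV 2)
  | 4 => (4 : ℝ) • e0 + (epsV 0 + epsV 1 + epsV 2 + epsV 3)
  | 5 => (5 : ℝ) • e0 + (epsV 0 + epsV 1 + epsV 2 + epsV 3 + epsV 4)
  | 6 => (6 : ℝ) • e0 + (epsV 0 + epsV 1 + epsV 2 + epsV 3 + epsV 4 + epsV 5)
  | 7 => (4 : ℝ) • e0 + (1 / 2 : ℝ) •
          (epsV 0 + epsV 1 + epsV 2 + epsV 3 + epsV 4 + epsV 5 + epsV 6 - epsV 7)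
  | 8 => (3 : ℝ) • e0 + (1 / 2 : ℝ) •
          (epsV 0 + epsV 1 + epsV 2 + epsV 3 + epsV 4 + epsV 5 + epsV 6 + epsV 7)

/-- The Weyl group orbit `W·Λ₁` of the fundamental weight `Λ₁ = (1,0;1,0,…,0)`. -/
def WeylOrbit : Set E9 := {v | ∃ g ∈ W, (g : E9 →ₗ[ℝ] E9) (Λw 1) = v}

/-- Type I straight weights: `(1, 0; ±εᵢ)`, `1 ≤ i ≤ 8`. -/
def TypeI : Set E9 := {v | ∃ i : Fin 8, v = e0 + epsV i ∨ v = e0 - epsV i}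

/-- Type II straight weights: `½(2, -1; ±1, …, ±1)` with an even number of minus
signs among the last eight coordinates. -/
def TypeII : Set E9 :=
  {v | ∃ s : Fin 8 → ℝ, (∀ i, s i = 1 ∨ s i = -1) ∧
    Even (Finset.univ.filter fun i => s i = -1).card ∧
    v = e0 - (1 / 2 : ℝ) • deltaV + (1 / 2 : ℝ) • ∑ i, s i • epsV i}

/-- Type III straight weights: `(1, -1; ν)` where `ν` is a permutation of
`(1,1,1,0,0,0,0,0)`. -/
def TypeIII : Set E9 :=
  {v | ∃ σ : Equiv.Perm (Fin 8),
    v = e0 - deltaV + ∑ i, (if ((σ i : ℕ)) < 3 then (1 : ℝ) else 0) • epsV i}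

/-- The set `Ω` of straight weights. -/
def Ω : Set E9 := TypeI ∪ TypeII ∪ TypeIII

/-- `k(λ) = -⟨λ, 2α̂₀⟩` where `α̂₀ = α₀ - ε₈`. -/
def kf (v : E9) : ℝ := -B v ((2 : ℝ) • (rootα 0 - epsV 7))

/-- `Δ(λ)`: `0` if `k(λ) ≤ 0` is even, `1/2` if `k(λ) ≤ 1` is odd, and
`(k(λ) + 2[λ]₃)/6` if `k(λ) ≥ 1`, where `[λ]₃` is the least nonnegative residue
of `k(λ)` modulo 3. -/
def Δf (v : E9) : ℝ :=
  if kf v ≤ 0 ∧ (∃ m : ℤ, kf v = 2 * m) then 0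
  else if kf v ≤ 1 ∧ (∃ m : ℤ, kf v = 2 * m + 1) then 1 / 2
  else (kf v + 2 * (kf v - 3 * ⌊kf v / 3⌋)) / 6

/-- A vector is a dominant weight if its pairing with every simple root is a
nonnegative integer. -/
def IsDominant (v : E9) : Prop := ∀ i : Fin 9, ∃ m : ℕ, B v (rootα i) = m

/-- The set `P(Λ₁) = {ω - sδ : ω ∈ W·Λ₁, s ∈ ℕ}` of weights of `V = V_{Λ₁}`. -/
def PLam1 : Set E9 := {v | ∃ w ∈ WeylOrbit, ∃ s : ℕ, v = w - (s : ℝ) • deltaV}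

/-- A dominant weight is initial if its `δ`-coordinate equals `-Δ` of it. -/
def IsInitial (v : E9) : Prop := IsDominant v ∧ v 1 = -Δf v


/-! ### Auxiliary machinery -/

@[local simp] private lemma c10_0 : ((0 : Fin 10) : ℕ) = 0 := rfl
@[local simp] private lemma c10_1 : ((1 : Fin 10) : ℕ) = 1 := rfl
@[local simp] private lemma c10_2 : ((2 : Fin 10) : ℕ) = 2 := rfl
@[local simp] private lemma c10_3 : ((3 : Fin 10) : ℕ) = 3 := rfl
@[local simp] private lemma c10_4 : ((4 : Fin 10) : ℕ) = 4 := rfl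
@[local simp] private lemma c10_5 : ((5 : Fin 10) : ℕ) = 5 := rfl
@[local simp] private lemma c10_6 : ((6 : Fin 10) : ℕ) = 6 := rfl
@[local simp] private lemma c10_7 : ((7 : Fin 10) : ℕ) = 7 := rfl
@[local simp] private lemma c10_8 : ((8 : Fin 10) : ℕ) = 8 := rfl
@[local simp] private lemma c10_9 : ((9 : Fin 10) : ℕ) = 9 := rfl
@[local simp] private lemma c8_0 : ((0 : Fin 8) : ℕ) = 0 := rfl
@[local simp] private lemma c8_1 : ((1 : Fin 8) : ℕ) = 1 := rfl
@[local simp] private lemma c8_2 : ((2 : Fin 8) : ℕ) = 2 := rfl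
@[local simp] private lemma c8_3 : ((3 : Fin 8) : ℕ) = 3 := rfl
@[local simp] private lemma c8_4 : ((4 : Fin 8) : ℕ) = 4 := rfl
@[local simp] private lemma c8_5 : ((5 : Fin 8) : ℕ) = 5 := rfl
@[local simp] private lemma c8_6 : ((6 : Fin 8) : ℕ) = 6 := rfl
@[local simp] private lemma c8_7 : ((7 : Fin 8) : ℕ) = 7 := rfl

private def G : ℤ → ℤ := fun m =>
  if m ≤ 0 ∧ m % 2 = 0 then 0
  else if m ≤ 1 ∧ m % 2 ≠ 0 then 1
  else (m + 2 * (m % 3)) / 3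

private lemma G_zero : G 0 = 0 := by simp [G]

private lemma G_step (m t : ℤ) (h2 : t % 2 = 1) (hl : -5 ≤ t) (hr : t ≤ 3) :
    G (m + t) ≤ G m + 1 := by
  simp only [G]; split_ifs <;> omega

private lemma G_step_even (m t : ℤ) (h2 : t % 2 = 0) (hl : -2 ≤ t) (hr : t ≤ 0) :
    G (m + t) ≤ G m := by
  simp only [G]; split_ifs <;> omega

private lemma G_step_two (m : ℤ) : G (m + 2) ≤ G m + 2 := by
  simp only [G]; split_ifs <;> omega

private lemma floor3 (m : ℤ) : ⌊(m:ℝ)/3⌋ = m / 3 := by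
  have h : ((m:ℝ))/3 = ((m/(3:ℕ) : ℚ) : ℝ) := by push_cast; ring
  rw [h, Rat.floor_cast, Rat.floor_intCast_div_natCast m 3]; norm_num

private lemma kf_eq (v : E9) :
    kf v = v 2 + v 3 + v 4 + v 5 + v 6 + v 7 + v 8 + v 9 - v 0 := by
  norm_num [kf, B, rootα, epsV, deltaV, Pi.add_apply, Pi.sub_apply, Pi.smul_apply, smul_eq_mul]
  ring

private lemma Delta_eq_G (v : E9) (m : ℤ) (h : kf v = (m:ℝ)) : Δf v = (G m : ℝ) / 2 := by
  have hle0 : kf v ≤ 0 ↔ m ≤ 0 := by rw [h]; exact_mod_cast Iff.rfl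
  have hle1 : kf v ≤ 1 ↔ m ≤ 1 := by rw [h]; exact_mod_cast Iff.rfl
  have heven : (∃ k : ℤ, kf v = 2*k) ↔ m % 2 = 0 := by
    constructor
    · rintro ⟨k, hk⟩
      rw [h] at hk
      have : m = 2*k := by exact_mod_cast hk
      omega
    · intro hm
      refine ⟨m/2, ?_⟩
      rw [h]
      exact_mod_cast congrArg (Int.cast : ℤ → ℝ) (by omega : m = 2*(m/2))
  have hodd : (∃ k : ℤ, kf v = 2*k+1) ↔ m % 2 = 1 := by
    constructor
    · rintro ⟨k, hk⟩
      rw [h] at hk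
      have : m = 2*k+1 := by exact_mod_cast hk
      omega
    · intro hm
      refine ⟨m/2, ?_⟩
      rw [h]
      exact_mod_cast congrArg (Int.cast : ℤ → ℝ) (by omega : m = 2*(m/2)+1)
  simp only [Δf, G]
  by_cases h1 : m ≤ 0 ∧ m % 2 = 0
  · rw [if_pos ⟨hle0.mpr h1.1, heven.mpr h1.2⟩, if_pos h1]
    norm_num
  · rw [if_neg (by rw [hle0, heven]; exact h1), if_neg h1]
    by_cases h2 : m ≤ 1 ∧ m % 2 ≠ 0
    · rw [if_pos ⟨hle1.mpr h2.1, hodd.mpr (by omega)⟩, if_pos h2]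
      norm_num
    · rw [if_neg (by rw [hle1, hodd]; omega), if_neg h2]
      rw [h, floor3]
      have hmod : m % 3 = m - 3 * (m / 3) := by omega
      obtain ⟨q, hq⟩ : (3:ℤ) ∣ (m + 2 * (m % 3)) := by omega
      have h3 : (m + 2 * (m % 3)) / 3 = q := by omega
      rw [h3]
      have e1 : (m:ℝ) - 3 * ((m/3 : ℤ):ℝ) = ((m % 3 : ℤ) : ℝ) := by
        push_cast [hmod]; ring
      rw [e1]
      have e2 : (m:ℝ) + 2 * ((m % 3 : ℤ):ℝ) = ((3*q : ℤ) : ℝ) := by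
        push_cast [← hq]; ring
      rw [e2]
      push_cast
      ring

private lemma kf_add (x y : E9) : kf (x + y) = kf x + kf y := by
  simp only [kf_eq, Pi.add_apply]; ring

private lemma kf_zero : kf 0 = 0 := by simp [kf_eq]

private lemma kf_sub (x y : E9) : kf (x - y) = kf x - kf y := by
  simp only [kf_eq, Pi.sub_apply]; ring

private lemma kf_smul (c : ℝ) (x : E9) : kf (c • x) = c * kf x := by
  simp only [kf_eq, Pi.smul_apply, smul_eq_mul]; ring

private lemma kf_sum {ι : Type*} (t : Finset ι) (f : ι → E9) :
    kf (∑ i ∈ t, f i) = ∑ i ∈ t, kf (f i) := by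
  classical
  induction t using Finset.induction with
  | empty => simpa using kf_zero
  | @insert a s ha ih => rw [Finset.sum_insert ha, Finset.sum_insert ha, kf_add, ih]

private lemma epsV_at1 (i : Fin 8) : epsV i 1 = 0 := by
  simp only [epsV, c10_1]
  rw [if_neg (by omega)]

private lemma e0_at1 : e0 1 = 0 := by simp [e0]
private lemma deltaV_at1 : deltaV 1 = 1 := by simp [deltaV]
private lemma kf_deltaV : kf deltaV = 0 := by simp [kf_eq, deltaV]
private lemma kf_e0 : kf e0 = -1 := by simp [kf_eq, e0]

private lemma kf_epsV (i : Fin 8) : kf (epsV i) = 1 := by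
  fin_cases i <;> norm_num [kf_eq, epsV]

private lemma straight_facts (w : E9) (hw : w ∈ Ω) :
    ∃ s d : ℤ, kf w = (s:ℝ) ∧ ((d:ℝ) = -2 * w 1) ∧ ∀ m : ℤ, G (m + s) ≤ G m + d := by
  rcases hw with (hw | hw) | hw
  · -- Type I
    obtain ⟨i, hi | hi⟩ := hw <;> subst hi
    · refine ⟨0, 0, ?_, ?_, ?_⟩
      · rw [kf_add, kf_e0, kf_epsV]; norm_num
      · rw [Pi.add_apply, e0_at1, epsV_at1]; norm_num
      · intro m; simp
    · refine ⟨-2, 0, ?_, ?_, ?_⟩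
      · rw [kf_sub, kf_e0, kf_epsV]; norm_num
      · rw [Pi.sub_apply, e0_at1, epsV_at1]; norm_num
      · intro m; simpa using G_step_even m (-2) (by norm_num) (by norm_num) (by norm_num)
  · -- Type II
    obtain ⟨s, hs, hev, rfl⟩ := hw
    set M := (Finset.univ.filter fun i => s i = -1).card with hM
    have hM8 : M ≤ 8 := by
      calc M ≤ Finset.univ.card := Finset.card_filter_le _ _
      _ = 8 := by simp
    have hsum : ∑ i, s i = 8 - 2 * (M:ℝ) := by
      rw [← Finset.sum_filter_add_sum_filter_not Finset.univ (fun i => s i = -1) s]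
      have h1 : ∑ i ∈ Finset.univ.filter (fun i => s i = -1), s i = -(M:ℝ) := by
        rw [Finset.sum_congr rfl (fun i hi => (Finset.mem_filter.mp hi).2)]
        simp [hM]
      have h2 : ∑ i ∈ Finset.univ.filter (fun i => ¬ s i = -1), s i
          = ((Finset.univ.filter fun i => ¬ s i = -1).card : ℝ) := by
        have hone : ∀ i ∈ Finset.univ.filter (fun i => ¬ s i = -1), s i = 1 := by
          intro i hi
          rcases hs i with h | h
          · exact h
          · exact absurd h (Finset.mem_filter.mp hi).2
        rw [Finset.sum_congr rfl hone]
        simp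
      have h3 : (Finset.univ.filter fun i => ¬ s i = -1).card = 8 - M := by
        have := Finset.card_filter_add_card_filter_not
          (s := (Finset.univ : Finset (Fin 8))) (p := fun i => s i = -1)
        simp only [Finset.card_univ, Fintype.card_fin] at this
        omega
      rw [h1, h2, h3]
      have : ((8 - M : ℕ) : ℝ) = 8 - (M:ℝ) := by
        push_cast [Nat.cast_sub hM8]; ring
      rw [this]; ring
    refine ⟨3 - M, 1, ?_, ?_, ?_⟩
    · rw [kf_add, kf_sub, kf_e0, kf_smul, kf_deltaV, kf_smul, kf_sum]
      have : ∀ i : Fin 8, kf (s i • epsV i) = s i := by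
        intro i; rw [kf_smul, kf_epsV, mul_one]
      rw [Finset.sum_congr rfl fun i _ => this i, hsum]
      push_cast
      ring
    · rw [Pi.add_apply, Pi.sub_apply, Pi.smul_apply, Pi.smul_apply, e0_at1, deltaV_at1,
        Finset.sum_apply]
      have : ∀ i : Fin 8, (s i • epsV i) 1 = 0 := by
        intro i; rw [Pi.smul_apply, epsV_at1, smul_zero]
      rw [Finset.sum_congr rfl fun i _ => this i]
      norm_num
    · intro m
      have hMe : M % 2 = 0 := Nat.even_iff.mp hev
      exact G_step m (3 - M) (by omega) (by omega) (by omega)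
  · -- Type III
    obtain ⟨σ, rfl⟩ := hw
    refine ⟨2, 2, ?_, ?_, ?_⟩
    · rw [kf_add, kf_sub, kf_e0, kf_deltaV, kf_sum]
      have : ∀ i : Fin 8, kf ((if ((σ i : ℕ)) < 3 then (1:ℝ) else 0) • epsV i)
          = (if ((σ i : ℕ)) < 3 then (1:ℝ) else 0) := by
        intro i; rw [kf_smul, kf_epsV, mul_one]
      rw [Finset.sum_congr rfl fun i _ => this i]
      have : ∑ i : Fin 8, (if ((σ i : ℕ)) < 3 then (1:ℝ) else 0)
          = ∑ i : Fin 8, (if ((i : ℕ)) < 3 then (1:ℝ) else 0) :=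
        Equiv.sum_comp σ (fun i => if ((i : ℕ)) < 3 then (1:ℝ) else 0)
      rw [this, Fin.sum_univ_eight]
      norm_num
    · rw [Pi.add_apply, Pi.sub_apply, e0_at1, deltaV_at1, Finset.sum_apply]
      have : ∀ i : Fin 8, ((if ((σ i : ℕ)) < 3 then (1:ℝ) else 0) • epsV i) 1 = 0 := by
        intro i; rw [Pi.smul_apply, epsV_at1, smul_zero]
      rw [Finset.sum_congr rfl fun i _ => this i]
      norm_num
    · intro m
      exact G_step_two m

private lemma G_chain (s d : ℕ → ℤ) (h : ∀ i m, G (m + s i) ≤ G m + d i) :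
    ∀ a b, a ≤ b → G (∑ i ∈ Finset.range b, s i) ≤
      G (∑ i ∈ Finset.range a, s i)
        + (∑ i ∈ Finset.range b, d i - ∑ i ∈ Finset.range a, d i) := by
  intro a b hab
  induction b, hab using Nat.le_induction with
  | base => simp
  | succ b hb ih =>
      rw [Finset.sum_range_succ, Finset.sum_range_succ (f := d)]
      have h2 := h b (∑ i ∈ Finset.range b, s i)
      linarith

private lemma sum_Iic_fin {M : Type*} [AddCommMonoid M] {n : ℕ} (j : Fin n)
    (f : Fin n → M) (f' : ℕ → M) (hf : ∀ i : Fin n, f' i.val = f i) :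
    ∑ i ∈ Finset.Iic j, f i = ∑ t ∈ Finset.range (j.val + 1), f' t := by
  refine Finset.sum_bij' (fun (i : Fin n) (_ : i ∈ Finset.Iic j) => (i : ℕ))
    (fun (t : ℕ) (ht : t ∈ Finset.range (j.val + 1)) =>
      (⟨t, by have := Finset.mem_range.mp ht; omega⟩ : Fin n)) ?_ ?_ ?_ ?_ ?_
  · intro a ha
    simp only [Finset.mem_range]
    have : a ≤ j := Finset.mem_Iic.mp ha
    omega
  · intro t ht
    have := Finset.mem_range.mp ht
    refine Finset.mem_Iic.mpr ?_
    exact Fin.mk_le_of_le_val (by omega)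
  · intro a ha; rfl
  · intro t ht; rfl
  · intro a ha; exact (hf a).symm

/-- Let `λ` be a dominant weight with `δ`-coordinate `0` and level
`n ≥ 1`, and let `ω₁, …, ω_n` be straight weights such that every partial sum
`σⱼ = ω₁ + ⋯ + ωⱼ` is dominant and `σ_n = λ - Δ(λ)δ`.  Then every partial sum `σⱼ`
is an initial weight, i.e. the `δ`-coordinate of `σⱼ` equals `-Δ(σⱼ)`. -/
theorem straight_weight_path_through_initial (lam : E9) (n : ℕ) (hn : 1 ≤ n)
    (hdom : IsDominant lam) (hdelta : lam 1 = 0) (hlevel : lam 0 = n)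
    (ω : Fin n → E9) (hω : ∀ i, ω i ∈ Ω)
    (hdomsum : ∀ j : Fin n, IsDominant (∑ i ∈ Finset.Iic j, ω i))
    (hend : ∑ i, ω i = lam - Δf lam • deltaV) :
    ∀ j : Fin n, IsInitial (∑ i ∈ Finset.Iic j, ω i) := by
  choose s d hks hd hstep using fun i => straight_facts (ω i) (hω i)
  set s' : ℕ → ℤ := fun t => if h : t < n then s ⟨t, h⟩ else 0 with hs'
  set d' : ℕ → ℤ := fun t => if h : t < n then d ⟨t, h⟩ else 0 with hd'
  have hstep' : ∀ i m, G (m + s' i) ≤ G m + d' i := by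
    intro i m
    by_cases h : i < n
    · simp only [hs', hd', dif_pos h]; exact hstep ⟨i, h⟩ m
    · simp only [hs', hd', dif_neg h]; simp
  have hkf : ∀ j : Fin n, kf (∑ i ∈ Finset.Iic j, ω i)
      = ((∑ t ∈ Finset.range (j.val + 1), s' t : ℤ) : ℝ) := by
    intro j
    rw [kf_sum, sum_Iic_fin j (fun i => kf (ω i)) (fun t => ((s' t : ℤ) : ℝ))
      (fun i => by simp only [hs', dif_pos i.isLt, Fin.eta]; rw [hks])]
    push_cast
    rfl
  have hdc : ∀ j : Fin n, (∑ i ∈ Finset.Iic j, ω i) 1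
      = -((∑ t ∈ Finset.range (j.val + 1), d' t : ℤ) : ℝ) / 2 := by
    intro j
    rw [Finset.sum_apply, sum_Iic_fin j (fun i => ω i 1) (fun t => -((d' t : ℤ) : ℝ) / 2)
      (fun i => by simp only [hd', dif_pos i.isLt, Fin.eta]; rw [hd i]; ring)]
    push_cast
    rw [← Finset.sum_div, Finset.sum_neg_distrib]
  -- last index
  have hn0 : n - 1 < n := by omega
  set jl : Fin n := ⟨n - 1, hn0⟩ with hjl
  have hjl1 : jl.val + 1 = n := by simp [hjl]; omega
  have hIic : Finset.Iic jl = Finset.univ := by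
    apply Finset.eq_univ_iff_forall.mpr
    intro i
    exact Finset.mem_Iic.mpr (by rw [Fin.le_def]; simp [hjl]; omega)
  set Ktot : ℤ := ∑ t ∈ Finset.range n, s' t with hKtot
  set Dtot : ℤ := ∑ t ∈ Finset.range n, d' t with hDtot
  have hkflam : kf lam = (Ktot : ℝ) := by
    have h1 : kf (∑ i, ω i) = (Ktot : ℝ) := by
      rw [← hIic, hkf jl, hjl1]
    rw [hend, kf_sub, kf_smul, kf_deltaV] at h1
    simpa using h1
  have hΔlam : Δf lam = (G Ktot : ℝ) / 2 := Delta_eq_G lam Ktot hkflam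
  have hDG : Dtot = G Ktot := by
    have h1 : (∑ i, ω i) 1 = -((Dtot : ℤ) : ℝ) / 2 := by
      rw [← hIic, hdc jl, hjl1]
    rw [hend, Pi.sub_apply, Pi.smul_apply, deltaV_at1, hdelta, hΔlam] at h1
    field_simp at h1
    rw [smul_eq_mul] at h1
    exact_mod_cast (by linarith : ((Dtot:ℤ):ℝ) = ((G Ktot:ℤ):ℝ))
  intro j
  have hKj := hkf j
  have hDj := hdc j
  set Kj : ℤ := ∑ t ∈ Finset.range (j.val + 1), s' t with hKjdef
  set Dj : ℤ := ∑ t ∈ Finset.range (j.val + 1), d' t with hDjdef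
  have hub : G Kj ≤ Dj := by
    have := G_chain s' d' hstep' 0 (j.val + 1) (by omega)
    simpa [G_zero] using this
  have hlb : Dj ≤ G Kj := by
    have := G_chain s' d' hstep' (j.val + 1) n (by omega)
    rw [← hKtot, ← hDtot, ← hKjdef, ← hDjdef, hDG] at this
    omega
  have hDjG : Dj = G Kj := le_antisymm hlb hub
  refine ⟨hdomsum j, ?_⟩
  rw [hDj, Delta_eq_G _ Kj hKj, hDjG]
  push_cast
  ring

end
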